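/- arXiv:2412.16340 — 4 statements merged into one kernel-verified Lean document; each statement's English description precedes it below -/
import Mathlib

section
/- Let A be a graded-commutative graded ring and let x be a homogeneous element of degree k > 0 such that multiplication by x gives an isomorphism A^i → A^{i+k} for all i ≥ 0, and suppose k is minimal among degrees of such periodicity-inducing elements. If x = y·z for homogeneous elements y, z with 0 < deg(y) < k, then a contradiction follows; i.e., x does not factor non-trivially. -/
/-- `x` is a nonzero homogeneous element of degree `k` such that multiplication
by `x` gives an isomorphism `A^i → A^{i+k}` for all `i ≥ 0`. -/
def InducesPeriodicity {A : Type*} [CommRing A] (𝒜 : ℕ → AddSubgroup A)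
    (k : ℕ) (x : A) : Prop :=
  x ≠ 0 ∧ x ∈ 𝒜 k ∧
    (∀ i : ℕ, ∀ a ∈ 𝒜 i, x * a = 0 → a = 0) ∧
    (∀ i : ℕ, ∀ b ∈ 𝒜 (i + k), ∃ a ∈ 𝒜 i, x * a = b)

namespace InducesPeriodicity

variable {A : Type*} [CommRing A] {𝒜 : ℕ → AddSubgroup A} [SetLike.GradedMul 𝒜]

theorem left_of_mul {d e : ℕ} {y z : A} (hx : InducesPeriodicity 𝒜 (d + e) (y * z))
    (hy : y ∈ 𝒜 d) (hz : z ∈ 𝒜 e) : InducesPeriodicity 𝒜 d y := by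
  obtain ⟨hx0, -, hinj, hsurj⟩ := hx
  refine ⟨left_ne_zero_of_mul hx0, hy, fun i a ha hya => hinj i a ha ?_, fun i b hb => ?_⟩
  · rw [mul_right_comm, hya, zero_mul]
  -- A preimage of `z * b` under `y * z` is a preimage of `b` under `y`, as `y * z` is injective
  -- in degree `i + d`.
  have hzb : z * b ∈ 𝒜 (i + (d + e)) := by
    simpa only [add_comm e, add_assoc] using SetLike.mul_mem_graded hz hb
  obtain ⟨a, ha, hxa⟩ := hsurj i (z * b) hzb
  have hya : y * a ∈ 𝒜 (i + d) := by
    simpa only [add_comm d] using SetLike.mul_mem_graded hy ha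
  refine ⟨a, ha, sub_eq_zero.mp (hinj (i + d) _ (sub_mem hya hb) ?_)⟩
  calc y * z * (y * a - b) = y * (y * z * a - z * b) := by ring
    _ = 0 := by rw [hxa, sub_self, mul_zero]

end InducesPeriodicity

theorem stmt4_general {A : Type*} [CommRing A] (𝒜 : ℕ → AddSubgroup A)
    [GradedRing 𝒜] (k : ℕ) (x : A)
    (hx : InducesPeriodicity 𝒜 k x)
    (hmin : ∀ k' : ℕ, ∀ x' : A, 0 < k' → InducesPeriodicity 𝒜 k' x' → k ≤ k') :
    ¬ ∃ (d : ℕ) (y z : A), 0 < d ∧ d < k ∧ y ∈ 𝒜 d ∧ z ∈ 𝒜 (k - d) ∧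
      x = y * z := by
  rintro ⟨d, y, z, hd, hdk, hy, hz, rfl⟩
  rw [← Nat.add_sub_cancel' hdk.le] at hx
  exact hdk.not_ge (hmin d y hd (hx.left_of_mul hy hz))

/-- In a graded-commutative graded ring `A`, if `x` is a
homogeneous element of degree `k > 0` inducing periodicity with `k` minimal
among degrees of periodicity-inducing elements, then `x` does not factor
non-trivially as `y·z` with `y` homogeneous of degree `0 < deg y < k`. -/
theorem stmt4 {A : Type*} [CommRing A] (𝒜 : ℕ → AddSubgroup A)
    [GradedRing 𝒜] (k : ℕ) (hk : 0 < k) (x : A)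
    (hx : InducesPeriodicity 𝒜 k x)
    (hmin : ∀ k' : ℕ, ∀ x' : A, 0 < k' → InducesPeriodicity 𝒜 k' x' → k ≤ k') :
    ¬ ∃ (d : ℕ) (y z : A), 0 < d ∧ d < k ∧ y ∈ 𝒜 d ∧ z ∈ 𝒜 (k - d) ∧
      x = y * z :=
  stmt4_general 𝒜 k x hx hmin
end

section
/- Let X be a connected space with H^*(X; Z_2) k-periodic via x ∈ H^k, with k the minimal period, and suppose H^{k/2}(X; Z_2) = 0. Assume k = 2^a ≥ 16. Then for all i with k/2 ≤ i < k, Sq^i(x) = 0. -/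
/-- `C(2^t - 1, m)` is odd for `m < 2^t`. -/
lemma choose_two_pow_sub_one_odd (t m : ℕ) (hm : m < 2 ^ t) :
    Nat.choose (2 ^ t - 1) m % 2 = 1 := by
  haveI : Fact (Nat.Prime 2) := ⟨Nat.prime_two⟩
  have h1 : 2 ^ t - 1 < 2 ^ t := by
    have := Nat.one_le_two_pow (n := t); omega
  have hmod := Choose.choose_modEq_prod_range_choose_nat (p := 2) h1 hm
  have hprod : ∏ i ∈ Finset.range t,
      Nat.choose ((2 ^ t - 1) / 2 ^ i % 2) (m / 2 ^ i % 2) = 1 := by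
    apply Finset.prod_eq_one
    intro i hi
    have hi' : i < t := Finset.mem_range.mp hi
    have hbit : (2 ^ t - 1) / 2 ^ i % 2 = 1 := by
      have := Nat.testBit_two_pow_sub_one t i
      rw [Nat.testBit_eq_decide_div_mod_eq] at this
      simpa [hi'] using this
    rw [hbit]
    have : m / 2 ^ i % 2 = 0 ∨ m / 2 ^ i % 2 = 1 := by omega
    rcases this with h | h <;> simp [h]
  rw [hprod] at hmod
  simpa [Nat.ModEq] using hmod

/-- Let `H^*(X; Z₂)` (formalized as a graded `Z₂`-algebra with
Steenrod squares satisfying the usual axioms) be `k`-periodic via `x ∈ H^k`,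
with `k` the minimal period, `H^{k/2} = 0`, and `k = 2^a ≥ 16`. Then
`Sq^i(x) = 0` for all `k/2 ≤ i < k`. -/
theorem stmt6 {A : Type*} [CommRing A] (h2 : ∀ u : A, u + u = 0)
    (𝒜 : ℕ → AddSubgroup A) [GradedRing 𝒜] (Sq : ℕ → A → A)
    (hSq_mem : ∀ (i j : ℕ) (u : A), u ∈ 𝒜 i → Sq j u ∈ 𝒜 (i + j))
    (hSq_add : ∀ (j : ℕ) (u v : A), Sq j (u + v) = Sq j u + Sq j v)
    (hSq_zero' : ∀ (i j : ℕ) (u : A), u ∈ 𝒜 i → i < j → Sq j u = 0)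
    (hSq_sq : ∀ (i : ℕ) (u : A), u ∈ 𝒜 i → Sq i u = u ^ 2)
    (hSq0 : ∀ u : A, Sq 0 u = u)
    (hCartan : ∀ (n : ℕ) (u v : A),
      Sq n (u * v) = ∑ h ∈ Finset.range (n + 1), Sq h u * Sq (n - h) v)
    (hAdem : ∀ a b : ℕ, 0 < a → a < 2 * b → ∀ u : A,
      Sq a (Sq b u) = ∑ j ∈ Finset.range (a / 2 + 1),
        Nat.choose (b - 1 - j) (a - 2 * j) • Sq (a + b - j) (Sq j u))
    (k : ℕ) (x : A) (hx : InducesPeriodicity 𝒜 k x)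
    (hmin : ∀ k' : ℕ, ∀ x' : A, 0 < k' → InducesPeriodicity 𝒜 k' x' → k ≤ k')
    (a : ℕ) (hk : k = 2 ^ a) (ha : 4 ≤ a)
    (hH : ∀ u ∈ 𝒜 (k / 2), u = 0) :
    ∀ i : ℕ, k / 2 ≤ i → i < k → Sq i x = 0 := by
  obtain ⟨hx0, hxk, hinj, hsurj⟩ := hx
  -- Sq of 0 is 0
  have hSqzero : ∀ j : ℕ, Sq j (0 : A) = 0 := by
    intro j
    have := hSq_add j 0 0
    rw [add_zero] at this
    exact (left_eq_add.mp this)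
  -- odd scalar acts as identity
  have hodd_smul : ∀ (n : ℕ) (u : A), n % 2 = 1 → n • u = u := by
    intro n u hn
    obtain ⟨m, hm⟩ : ∃ m, n = 2 * m + 1 := ⟨n / 2, by omega⟩
    subst hm
    rw [add_nsmul, one_nsmul, mul_comm, mul_nsmul]
    have h0 : (2 : ℕ) • (m • u) = 0 := by rw [two_nsmul]; exact h2 _
    rw [h0, zero_add]
  -- set K = k/2
  set K := 2 ^ (a - 1) with hK
  have hkK : k = 2 * K := by
    rw [hk, hK, ← pow_succ']
    congr 1; omega
  have hk2 : k / 2 = K := by omega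
  have hKpos : 0 < K := Nat.pow_pos (by norm_num)
  -- base case: Sq K x = 0
  have hbase : Sq K x = 0 := by
    have hmem : Sq K x ∈ 𝒜 (K + k) := by
      have := hSq_mem k K x hxk
      rwa [Nat.add_comm] at this
    obtain ⟨a0, ha0, hxa⟩ := hsurj K _ hmem
    have : a0 = 0 := hH a0 (by rwa [hk2])
    rw [this, mul_zero] at hxa
    exact hxa.symm
  -- strong induction
  intro i
  induction i using Nat.strong_induction_on with
  | _ i ih =>
    intro hge hlt
    rw [hk2] at hge
    rcases Nat.eq_or_lt_of_le hge with heq | hgt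
    · rw [← heq]; exact hbase
    · -- i > K; set δ = i - K
      set δ := i - K with hδ
      have hδpos : 0 < δ := by omega
      have hδlt : δ < 2 * K := by omega
      have hδltK : δ < K := by omega
      have hiδ : i = δ + K := by omega
      -- Adem relation with a = δ, b = K
      have hAd := hAdem δ K hδpos hδlt x
      rw [hbase, hSqzero] at hAd
      -- show each nonzero-j term vanishes; j = 0 term is Sq i x
      have hterm : ∀ j ∈ Finset.range (δ / 2 + 1), j ≠ 0 →
          Nat.choose (K - 1 - j) (δ - 2 * j) • Sq (δ + K - j) (Sq j x) = 0 := by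
        intro j hj hj0
        have hjle : j ≤ δ / 2 := by
          have := Finset.mem_range.mp hj; omega
        have hjpos : 0 < j := Nat.pos_of_ne_zero hj0
        have h2j : 2 * j ≤ δ := by omega
        -- Sq j x ∈ 𝒜 (j + k), write Sq j x = x * xj with xj ∈ 𝒜 j
        have hmemj : Sq j x ∈ 𝒜 (j + k) := by
          have := hSq_mem k j x hxk
          rwa [Nat.add_comm] at this
        obtain ⟨xj, hxj, hmul⟩ := hsurj j _ hmemj
        rw [← hmul, hCartan (δ + K - j) x xj]
        have hsum0 : ∑ h ∈ Finset.range (δ + K - j + 1),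
            Sq h x * Sq (δ + K - j - h) xj = 0 := by
          apply Finset.sum_eq_zero
          intro h hh
          have hhle : h ≤ δ + K - j := by
            have := Finset.mem_range.mp hh; omega
          by_cases hcase : h < δ + K - 2 * j
          · -- the second factor vanishes: δ + K - j - h > j
            have : j < δ + K - j - h := by omega
            rw [hSq_zero' j _ xj hxj this, mul_zero]
          · -- Sq h x = 0 by induction hypothesis
            have hhk : K ≤ h := by omega
            have hhlti : h < i := by omega
            have hhltk : h < k := by omega
            rw [ih h hhlti (by omega) hhltk, zero_mul]
        rw [hsum0, smul_zero]
      -- evaluate the sum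
      have hsum := Finset.sum_eq_single_of_mem (0 : ℕ)
        (Finset.mem_range.mpr (by omega)) hterm
      rw [hsum] at hAd
      -- j = 0 term: choose (K - 1) δ • Sq (δ + K) x
      have hc : Nat.choose (K - 1 - 0) (δ - 2 * 0) % 2 = 1 := by
        simp only [Nat.sub_zero, Nat.mul_zero]
        have : K - 1 = 2 ^ (a - 1) - 1 := by rw [hK]
        rw [this]
        exact choose_two_pow_sub_one_odd (a - 1) δ (by rw [← hK]; omega)
      rw [hSq0, hodd_smul _ _ hc] at hAd
      have : δ + K - 0 = i := by omega
      rw [this] at hAd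
      exact hAd.symm
end

section
/- Let A = ⊕_{i≥0} A^i be a graded Z_2-algebra with A^0 ≅ Z_2, equipped with operations Sq^j : A^i → A^{i+j} satisfying the Cartan formula Sq^n(uv) = ∑_{h=0}^n Sq^h(u) Sq^{n−h}(v), Sq^0 = id, and Sq^n(u) = u^2 when n = deg(u). Suppose x ∈ A^k induces periodicity with k minimal, and Sq^i(x) = 0 for all 0 < i < k with i ≠ j₀ for some fixed j₀. If in addition x^2 = Sq^m(y) for some homogeneous y with deg(y) ∉ {k, 2k}, derive that x^2 decomposes in a way contradicting minimality of k. -/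
open Finset

/-- In characteristic two the middle term is the only unpaired one. -/
theorem sum_range_mul_sub_eq_mul_self {R : Type*} [CommRing R] (h2 : ∀ u : R, u + u = 0)
    (f : ℕ → R) (m : ℕ) : ∑ h ∈ range (m + m + 1), f h * f (m + m - h) = f m * f m := by
  rw [← add_sum_erase _ _ (mem_range.mpr (by omega : m < m + m + 1)), Nat.add_sub_cancel,
    add_eq_left]
  refine sum_involution (fun a _ => m + m - a) (fun a ha => ?_) (fun a ha _ => ?_)
    (fun a ha => ?_) (fun a ha => ?_) <;> simp only [mem_erase, mem_range] at ha ⊢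
  · rw [Nat.sub_sub_self (by omega), mul_comm]
    exact h2 _
  all_goals omega

namespace InducesPeriodicity

variable {A : Type*} [CommRing A] {𝒜 : ℕ → AddSubgroup A} {k : ℕ} {x : A}

theorem mul_left_cancel (hx : InducesPeriodicity 𝒜 k x) {i : ℕ} {a b : A} (ha : a ∈ 𝒜 i)
    (hb : b ∈ 𝒜 i) (h : x * a = x * b) : a = b :=
  sub_eq_zero.mp (hx.2.2.1 i _ (sub_mem ha hb) (by rw [mul_sub, h, sub_self]))

theorem mul_self_ne_zero (hx : InducesPeriodicity 𝒜 k x) : x * x ≠ 0 :=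
  fun h => hx.1 (hx.2.2.1 k x hx.2.1 h)

variable [SetLike.GradedMul 𝒜]

theorem left_of_mul_eq (hx : InducesPeriodicity 𝒜 k x) {a b : ℕ} {z u : A} (hz : z ∈ 𝒜 a)
    (hu : u ∈ 𝒜 b) (hab : a + b = k) (hzu : z * u = x) : InducesPeriodicity 𝒜 a z := by
  obtain ⟨hx0, -, hinj, hsurj⟩ := hx
  have hu_inj : ∀ i, ∀ c ∈ 𝒜 i, u * c = 0 → c = 0 := fun i c hc huc =>
    hinj i c hc (by rw [← hzu, mul_assoc, huc, mul_zero])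
  refine ⟨?_, hz, fun i c hc hzc => hinj i c hc ?_, fun i c hc => ?_⟩
  · rintro rfl
    exact hx0 (by rw [← hzu, zero_mul])
  · rw [← hzu, mul_comm z, mul_assoc, hzc, mul_zero]
  · have huc : u * c ∈ 𝒜 (i + k) := by
      rw [← hab, show i + (a + b) = b + (i + a) by omega]
      exact SetLike.mul_mem_graded hu hc
    obtain ⟨c', hc', hxc'⟩ := hsurj i (u * c) huc
    have hzc' : z * c' ∈ 𝒜 (i + a) := add_comm a i ▸ SetLike.mul_mem_graded hz hc'
    refine ⟨c', hc', sub_eq_zero.mp (hu_inj _ _ (sub_mem hzc' hc) ?_)⟩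
    rw [mul_sub, ← hxc', ← hzu]
    ring

theorem mul_eq_zero_of_minimal (hx : InducesPeriodicity 𝒜 k x)
    (hmin : ∀ k' : ℕ, ∀ x' : A, 0 < k' → InducesPeriodicity 𝒜 k' x' → k ≤ k')
    (h0 : ∀ u ∈ 𝒜 0, u = 0 ∨ u = 1) {a b : ℕ} {w v : A} (hw : w ∈ 𝒜 a) (hv : v ∈ 𝒜 b)
    (hab : a + b = k) (ha : 0 < a) (hb : 0 < b) : w * v = 0 := by
  have hwv : w * v ∈ 𝒜 (0 + k) := by
    rw [zero_add, ← hab]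
    exact SetLike.mul_mem_graded hw hv
  obtain ⟨c, hc, hxc⟩ := hx.2.2.2 0 (w * v) hwv
  rcases h0 c hc with rfl | rfl
  · rw [← hxc, mul_zero]
  · have := hmin a w ha (hx.left_of_mul_eq hw hv hab (by rw [← hxc, mul_one]))
    omega

theorem Sq_mul_eq_mul_Sq_of_minimal {Sq : ℕ → A → A} (h0 : ∀ u ∈ 𝒜 0, u = 0 ∨ u = 1)
    (hSq_mem : ∀ (i j : ℕ) (u : A), u ∈ 𝒜 i → Sq j u ∈ 𝒜 (i + j))
    (hSq0 : ∀ u : A, Sq 0 u = u)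
    (hCartan : ∀ (n : ℕ) (u v : A),
      Sq n (u * v) = ∑ h ∈ range (n + 1), Sq h u * Sq (n - h) v)
    (hx : InducesPeriodicity 𝒜 k x)
    (hmin : ∀ k' : ℕ, ∀ x' : A, 0 < k' → InducesPeriodicity 𝒜 k' x' → k ≤ k')
    {j₀ : ℕ} (hvan : ∀ i : ℕ, 0 < i → i < k → i ≠ j₀ → Sq i x = 0)
    {e m : ℕ} {y : A} (hy : y ∈ 𝒜 e) (hem : e + m = k) (he : 0 < e) :
    Sq m (x * y) = x * Sq m y := by
  rw [hCartan, sum_eq_single 0 (fun h hh hh0 => ?_) (by simp), hSq0, Nat.sub_zero]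
  have hhm : h ≤ m := Nat.lt_succ_iff.mp (mem_range.mp hh)
  obtain rfl | hj := eq_or_ne h j₀
  · have hSqx : Sq h x ∈ 𝒜 (h + k) := add_comm k h ▸ hSq_mem k h x hx.2.1
    obtain ⟨w, hw, hxw⟩ := hx.2.2.2 h (Sq h x) hSqx
    rw [← hxw, mul_assoc, hx.mul_eq_zero_of_minimal hmin h0 hw (hSq_mem e (m - h) y hy)
      (by omega) (by omega) (by omega), mul_zero]
  · rw [hvan h (Nat.pos_of_ne_zero hh0) (by omega) hj, zero_mul]

end InducesPeriodicity

theorem stmt11_general {A : Type*} [CommRing A] (h2 : ∀ u : A, u + u = 0)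
    (𝒜 : ℕ → AddSubgroup A) [GradedRing 𝒜]
    (h0 : ∀ u ∈ 𝒜 0, u = 0 ∨ u = 1)
    (Sq : ℕ → A → A)
    (hSq_mem : ∀ (i j : ℕ) (u : A), u ∈ 𝒜 i → Sq j u ∈ 𝒜 (i + j))
    (hSq_zero' : ∀ (i j : ℕ) (u : A), u ∈ 𝒜 i → i < j → Sq j u = 0)
    (hSq_sq : ∀ (i : ℕ) (u : A), u ∈ 𝒜 i → Sq i u = u ^ 2)
    (hSq0 : ∀ u : A, Sq 0 u = u)
    (hCartan : ∀ (n : ℕ) (u v : A),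
      Sq n (u * v) = ∑ h ∈ Finset.range (n + 1), Sq h u * Sq (n - h) v)
    (k : ℕ) (x : A) (hx : InducesPeriodicity 𝒜 k x)
    (hmin : ∀ k' : ℕ, ∀ x' : A, 0 < k' → InducesPeriodicity 𝒜 k' x' → k ≤ k')
    (j₀ : ℕ)
    (hvan : ∀ i : ℕ, 0 < i → i < k → i ≠ j₀ → Sq i x = 0)
    (y : A) (d m : ℕ) (hy : y ∈ 𝒜 d) (hdm : d + m = 2 * k)
    (hd1 : d ≠ k) (hd2 : d ≠ 2 * k)
    (hxy : x ^ 2 = Sq m y) :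
    False := by
  induction d using Nat.strong_induction_on generalizing y m with
  | _ d ih =>
  rw [sq] at hxy
  rcases Nat.lt_or_gt_of_ne hd1 with hdk | hdk
  · exact hx.mul_self_ne_zero (hxy.trans (hSq_zero' d m y hy (by omega)))
  obtain ⟨y', hy', rfl⟩ := hx.2.2.2 (d - k) y (by rwa [Nat.sub_add_cancel hdk.le])
  have hSqy' : Sq m y' ∈ 𝒜 k := (by omega : d - k + m = k) ▸ hSq_mem (d - k) m y' hy'
  have hx_eq : x = Sq m y' := hx.mul_left_cancel hx.2.1 hSqy' <| hxy.trans <|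
    hx.Sq_mul_eq_mul_Sq_of_minimal h0 hSq_mem hSq0 hCartan hmin hvan hy' (by omega) (by omega)
  rcases lt_trichotomy m (d - k) with hm | rfl | hm
  · refine ih (d - k + (d - k)) (by omega) (y' * y') (m + m) (SetLike.mul_mem_graded hy' hy')
      (by omega) (by omega) (by omega) ?_
    rw [sq, hCartan, sum_range_mul_sub_eq_mul_self h2, ← hx_eq]
  · refine hx.1 (hx_eq.trans ?_)
    rw [hSq_sq _ y' hy', sq]
    exact hx.mul_eq_zero_of_minimal hmin h0 hy' hy' (by omega) (by omega) (by omega)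
  · exact hx.1 (hx_eq.trans (hSq_zero' _ m y' hy' hm))

/-- Let `A = ⊕ A^i` be a graded `Z₂`-algebra with `A^0 ≅ Z₂`,
equipped with operations `Sq^j : A^i → A^{i+j}` satisfying the Cartan formula,
`Sq^0 = id`, and `Sq^n(u) = u²` when `n = deg u`. Suppose `x ∈ A^k` induces
periodicity with `k` minimal and `Sq^i(x) = 0` for all `0 < i < k` with
`i ≠ j₀`. If in addition `x² = Sq^m(y)` for a homogeneous `y` of degree
`∉ {k, 2k}`, then a contradiction follows. -/
theorem stmt11 {A : Type*} [CommRing A] (h2 : ∀ u : A, u + u = 0)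
    (𝒜 : ℕ → AddSubgroup A) [GradedRing 𝒜]
    (h0 : ∀ u ∈ 𝒜 0, u = 0 ∨ u = 1)
    (Sq : ℕ → A → A)
    (hSq_mem : ∀ (i j : ℕ) (u : A), u ∈ 𝒜 i → Sq j u ∈ 𝒜 (i + j))
    (hSq_add : ∀ (j : ℕ) (u v : A), Sq j (u + v) = Sq j u + Sq j v)
    (hSq_zero' : ∀ (i j : ℕ) (u : A), u ∈ 𝒜 i → i < j → Sq j u = 0)
    (hSq_sq : ∀ (i : ℕ) (u : A), u ∈ 𝒜 i → Sq i u = u ^ 2)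
    (hSq0 : ∀ u : A, Sq 0 u = u)
    (hCartan : ∀ (n : ℕ) (u v : A),
      Sq n (u * v) = ∑ h ∈ Finset.range (n + 1), Sq h u * Sq (n - h) v)
    (k : ℕ) (hk : 0 < k) (x : A) (hx : InducesPeriodicity 𝒜 k x)
    (hmin : ∀ k' : ℕ, ∀ x' : A, 0 < k' → InducesPeriodicity 𝒜 k' x' → k ≤ k')
    (j₀ : ℕ)
    (hvan : ∀ i : ℕ, 0 < i → i < k → i ≠ j₀ → Sq i x = 0)
    (y : A) (d m : ℕ) (hy : y ∈ 𝒜 d) (hdm : d + m = 2 * k)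
    (hd1 : d ≠ k) (hd2 : d ≠ 2 * k)
    (hxy : x ^ 2 = Sq m y) :
    False :=
  stmt11_general h2 𝒜 h0 Sq hSq_mem hSq_zero' hSq_sq hSq0 hCartan k x hx hmin j₀ hvan y d m hy hdm
    hd1 hd2 hxy
end

section
/- In the setting of a 16-periodic mod-2 cohomology ring with minimal period 16, periodicity element x, Sq^1 = Sq^2 = 0, and Sq^i(x) = x y_i for i ∈ {4,8,12}: Sq^4 y_8 = y_{12}. -/
theorem InducesPeriodicity.mul_left_cancel_s15 {A : Type*} [CommRing A] {𝒜 : ℕ → AddSubgroup A}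
    {k : ℕ} {x : A} (hx : InducesPeriodicity 𝒜 k x) {i : ℕ} {a b : A} (ha : a ∈ 𝒜 i)
    (hb : b ∈ 𝒜 i) (h : x * a = x * b) : a = b :=
  sub_eq_zero.mp <| hx.2.2.1 i (a - b) (sub_mem ha hb) (by rw [mul_sub, h, sub_self])

theorem sq_four_mul_of_sq_one_sq_two_eq_zero {A : Type*} [CommRing A] (Sq : ℕ → A → A)
    (hSq0 : ∀ u : A, Sq 0 u = u)
    (hCartan : ∀ (n : ℕ) (u v : A),
      Sq n (u * v) = ∑ h ∈ Finset.range (n + 1), Sq h u * Sq (n - h) v)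
    (hSq1 : ∀ u : A, Sq 1 u = 0) (hSq2 : ∀ u : A, Sq 2 u = 0) (u v : A) :
    Sq 4 (u * v) = u * Sq 4 v + Sq 4 u * v := by
  simp [hCartan, Finset.sum_range_succ, hSq0, hSq1, hSq2]

theorem stmt15_general {A : Type*} [CommRing A]
    (𝒜 : ℕ → AddSubgroup A) (Sq : ℕ → A → A)
    (hSq_mem : ∀ (i j : ℕ) (u : A), u ∈ 𝒜 i → Sq j u ∈ 𝒜 (i + j))
    (hSq0 : ∀ u : A, Sq 0 u = u)
    (hCartan : ∀ (n : ℕ) (u v : A),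
      Sq n (u * v) = ∑ h ∈ Finset.range (n + 1), Sq h u * Sq (n - h) v)
    (hSq1 : ∀ u : A, Sq 1 u = 0) (hSq2 : ∀ u : A, Sq 2 u = 0)
    (hAdem412 : ∀ u : A, Sq 12 u = Sq 4 (Sq 8 u))
    (x : A) (hx : InducesPeriodicity 𝒜 16 x)
    (y : ℕ → A) (hy_mem : ∀ i ∈ ({4, 8, 12} : Finset ℕ), y i ∈ 𝒜 i)
    (hxy : ∀ i ∈ ({4, 8, 12} : Finset ℕ), Sq i x = x * y i)
    (hprod : ∀ i ∈ ({4, 8, 12} : Finset ℕ), ∀ j ∈ ({4, 8, 12} : Finset ℕ),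
      y i * y j = 0) :
    Sq 4 (y 8) = y 12 := by
  have hy8 : y 8 ∈ 𝒜 8 := hy_mem 8 (by simp)
  have h48 : y 4 * y 8 = 0 := hprod 4 (by simp) 8 (by simp)
  have key : x * Sq 4 (y 8) = x * y 12 :=
    calc x * Sq 4 (y 8) = x * Sq 4 (y 8) + x * (y 4 * y 8) := by rw [h48, mul_zero, add_zero]
      _ = Sq 4 (x * y 8) := by
        rw [sq_four_mul_of_sq_one_sq_two_eq_zero Sq hSq0 hCartan hSq1 hSq2, hxy 4 (by simp),
          mul_assoc]
      _ = x * y 12 := by rw [← hxy 8 (by simp), ← hAdem412, hxy 12 (by simp)]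
  exact hx.mul_left_cancel_s15 (hSq_mem 8 4 _ hy8) (hy_mem 12 (by simp)) key

/-- In the setting of a 16-periodic mod-2 cohomology ring with
minimal period 16, periodicity element `x`, `Sq^1 = Sq^2 = 0`, and
`Sq^i(x) = x·yᵢ` for `i ∈ {4, 8, 12}`:  `Sq^4 y₈ = y₁₂`.  (The Adem relation
`Sq^12 = Sq^4 Sq^8` — valid modulo terms involving `Sq^1, Sq^2` — and the
product vanishings `yᵢ yⱼ = 0` are included as hypotheses.) -/
theorem stmt15 {A : Type*} [CommRing A] (h2 : ∀ u : A, u + u = 0)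
    (𝒜 : ℕ → AddSubgroup A) [GradedRing 𝒜] (Sq : ℕ → A → A)
    (hSq_mem : ∀ (i j : ℕ) (u : A), u ∈ 𝒜 i → Sq j u ∈ 𝒜 (i + j))
    (hSq_add : ∀ (j : ℕ) (u v : A), Sq j (u + v) = Sq j u + Sq j v)
    (hSq_zero' : ∀ (i j : ℕ) (u : A), u ∈ 𝒜 i → i < j → Sq j u = 0)
    (hSq_sq : ∀ (i : ℕ) (u : A), u ∈ 𝒜 i → Sq i u = u ^ 2)
    (hSq0 : ∀ u : A, Sq 0 u = u)
    (hCartan : ∀ (n : ℕ) (u v : A),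
      Sq n (u * v) = ∑ h ∈ Finset.range (n + 1), Sq h u * Sq (n - h) v)
    (hSq1 : ∀ u : A, Sq 1 u = 0) (hSq2 : ∀ u : A, Sq 2 u = 0)
    (hAdem412 : ∀ u : A, Sq 12 u = Sq 4 (Sq 8 u))
    (x : A) (hx : InducesPeriodicity 𝒜 16 x)
    (hmin : ∀ k' : ℕ, ∀ x' : A, 0 < k' → InducesPeriodicity 𝒜 k' x' → 16 ≤ k')
    (y : ℕ → A) (hy_mem : ∀ i ∈ ({4, 8, 12} : Finset ℕ), y i ∈ 𝒜 i)
    (hxy : ∀ i ∈ ({4, 8, 12} : Finset ℕ), Sq i x = x * y i)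
    (hprod : ∀ i ∈ ({4, 8, 12} : Finset ℕ), ∀ j ∈ ({4, 8, 12} : Finset ℕ),
      y i * y j = 0) :
    Sq 4 (y 8) = y 12 :=
  stmt15_general 𝒜 Sq hSq_mem hSq0 hCartan hSq1 hSq2 hAdem412 x hx y hy_mem hxy hprod
end
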